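/- Multiple robustness (case b,q correct): if the nuisance value η₁ satisfies b₁ = b and q₁ = q (true outcome regression and true conditional law of Z given A,W), with u₁ and v₁ defined accordingly from b₁ and q₁ (i.e., u₁(z,a,w) = Σ_m b(a,z,m,w) p(m|a*,w) and v₁(a,w) = Σ_{m,z} b(a',z,m,w) q(z|a',w) p(m|a,w)), but g₁, h₁, r₁ possibly misspecified (though strictly positive), then E[D_{η₁}(O)] = θ. -/
import Mathlib


open Finset
open scoped Classical

/-- Probability of the event `S` under the pmf `P` on a finite outcome space. -/
noncomputable def pr {Ω : Type*} [Fintype Ω] (P : Ω → ℝ) (S : Ω → Prop) : ℝ :=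
  ∑ ω, if S ω then P ω else 0

/-- Conditional probability `P(S | T)`. -/
noncomputable def cpr {Ω : Type*} [Fintype Ω] (P : Ω → ℝ) (S T : Ω → Prop) : ℝ :=
  pr P (fun ω => S ω ∧ T ω) / pr P T

/-- Conditional expectation `E[f | T]` (pmf-weighted average). -/
noncomputable def cex {Ω : Type*} [Fintype Ω] (P : Ω → ℝ) (f : Ω → ℝ)
    (T : Ω → Prop) : ℝ :=
  (∑ ω, if T ω then P ω * f ω else 0) / pr P T

section EIF

variable {Ω 𝒲 𝒜 𝒵 ℳ : Type*} [Fintype Ω] [Fintype 𝒲] [Fintype 𝒜] [Fintype 𝒵]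
  [Fintype ℳ]
variable (P : Ω → ℝ) (W : Ω → 𝒲) (A : Ω → 𝒜) (Z : Ω → 𝒵) (M : Ω → ℳ) (Y : Ω → ℝ)

/-- True `q(z|a,w) = P(Z=z|A=a,W=w)`. -/
noncomputable def qq (z : 𝒵) (a : 𝒜) (w : 𝒲) : ℝ :=
  cpr P (fun ω => Z ω = z) (fun ω => A ω = a ∧ W ω = w)

/-- True `p(m|a,w) = P(M=m|A=a,W=w)`. -/
noncomputable def pM (m : ℳ) (a : 𝒜) (w : 𝒲) : ℝ :=
  cpr P (fun ω => M ω = m) (fun ω => A ω = a ∧ W ω = w)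

/-- True outcome regression `b(a,z,m,w) = E[Y|A=a,Z=z,M=m,W=w]`. -/
noncomputable def bb (a : 𝒜) (z : 𝒵) (m : ℳ) (w : 𝒲) : ℝ :=
  cex P Y (fun ω => A ω = a ∧ Z ω = z ∧ M ω = m ∧ W ω = w)

/-- True `u(z,a,w) = Σ_m b(a,z,m,w) p(m|a*,w)` (recomputed from `b` and the true
mediator law). -/
noncomputable def uu (astar : 𝒜) (z : 𝒵) (a : 𝒜) (w : 𝒲) : ℝ :=
  ∑ m, bb P W A Z M Y a z m w * pM P W A M m astar w

/-- True `v(a,w) = Σ_{m,z} b(a',z,m,w) q(z|a',w) p(m|a,w)`. -/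
noncomputable def vv (a' : 𝒜) (a : 𝒜) (w : 𝒲) : ℝ :=
  ∑ m, ∑ z, bb P W A Z M Y a' z m w * qq P W A Z z a' w * pM P W A M m a w

/-- The target parameter `θ`. -/
noncomputable def θparam (a' astar : 𝒜) : ℝ :=
  ∑ w, ∑ z, ∑ m, bb P W A Z M Y a' z m w * qq P W A Z z a' w *
    pM P W A M m astar w * pr P (fun ω => W ω = w)

/-- The density ratio `c₁` in the alternative (Bayes-rule) parameterization, built
from possibly misspecified `g₁`, `h₁`, `r₁` and the true `q`. -/
noncomputable def cOne (g₁ : 𝒜 → 𝒲 → ℝ) (h₁ : 𝒜 → ℳ → 𝒲 → ℝ)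
    (r₁ : 𝒵 → 𝒜 → ℳ → 𝒲 → ℝ) (astar a : 𝒜) (z : 𝒵) (m : ℳ) (w : 𝒲) : ℝ :=
  g₁ a w / g₁ astar w * (qq P W A Z z a w / r₁ z a m w) *
    (h₁ astar m w / h₁ a m w)

/-- The uncentered EIF `D_{η₁}` with `b₁ = b`, `q₁ = q` true (hence `u₁ = u`,
`v₁ = v`) and possibly misspecified `g₁, h₁, r₁` in `c₁` and the inverse weights. -/
noncomputable def DOne (g₁ : 𝒜 → 𝒲 → ℝ) (h₁ : 𝒜 → ℳ → 𝒲 → ℝ)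
    (r₁ : 𝒵 → 𝒜 → ℳ → 𝒲 → ℝ) (a' astar : 𝒜) (ω : Ω) : ℝ :=
  (if A ω = a' then (1 : ℝ) else 0) / g₁ a' (W ω) *
      cOne P W A Z g₁ h₁ r₁ astar a' (Z ω) (M ω) (W ω) *
      (Y ω - bb P W A Z M Y a' (Z ω) (M ω) (W ω)) +
    (if A ω = a' then (1 : ℝ) else 0) / g₁ a' (W ω) *
      (uu P W A Z M Y astar (Z ω) a' (W ω) -
        ∑ z, uu P W A Z M Y astar z a' (W ω) * qq P W A Z z a' (W ω)) +
    (if A ω = astar then (1 : ℝ) else 0) / g₁ astar (W ω) *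
      ((∑ z, bb P W A Z M Y a' z (M ω) (W ω) * qq P W A Z z a' (W ω)) -
        vv P W A Z M Y a' astar (W ω)) +
    vv P W A Z M Y a' astar (W ω)


section AuxLemmas

variable {Ω 𝒲 𝒜 𝒵 ℳ : Type*} [Fintype Ω] [Fintype 𝒲] [Fintype 𝒜] [Fintype 𝒵]
  [Fintype ℳ]
variable (P : Ω → ℝ) (W : Ω → 𝒲) (A : Ω → 𝒜) (Z : Ω → 𝒵) (M : Ω → ℳ) (Y : Ω → ℝ)

lemma pr_congr' {S T : Ω → Prop} (h : ∀ ω, S ω ↔ T ω) : pr P S = pr P T :=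
  Finset.sum_congr rfl fun ω _ => if_congr (h ω) rfl rfl

lemma pr_mono' (hP : ∀ ω, 0 ≤ P ω) {S T : Ω → Prop} (h : ∀ ω, S ω → T ω) :
    pr P S ≤ pr P T := by
  refine Finset.sum_le_sum fun ω _ => ?_
  by_cases hs : S ω
  · rw [if_pos hs, if_pos (h ω hs)]
  · rw [if_neg hs]
    by_cases ht : T ω <;> simp [ht, hP ω]

lemma pr_fiber' {ι : Type*} [Fintype ι] (S : Ω → Prop) (f : Ω → ι) :
    pr P S = ∑ i, pr P (fun ω => S ω ∧ f ω = i) := by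
  unfold pr
  rw [Finset.sum_comm]
  refine Finset.sum_congr rfl fun ω _ => ?_
  by_cases hs : S ω <;> simp [hs]

lemma sum_partition' (F : Ω → ℝ) :
    ∑ ω, F ω = ∑ w, ∑ a, ∑ z, ∑ m, ∑ ω,
      if W ω = w ∧ A ω = a ∧ Z ω = z ∧ M ω = m then F ω else 0 := by
  calc ∑ ω, F ω
      = ∑ ω, ∑ w, ∑ a, ∑ z, ∑ m,
          if W ω = w ∧ A ω = a ∧ Z ω = z ∧ M ω = m then F ω else 0 := by
        refine Finset.sum_congr rfl fun ω _ => ?_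
        simp [ite_and, Finset.sum_ite_eq']
    _ = ∑ w, ∑ a, ∑ z, ∑ m, ∑ ω,
          if W ω = w ∧ A ω = a ∧ Z ω = z ∧ M ω = m then F ω else 0 := by
        rw [Finset.sum_comm]
        refine Finset.sum_congr rfl fun w _ => ?_
        rw [Finset.sum_comm]
        refine Finset.sum_congr rfl fun a _ => ?_
        rw [Finset.sum_comm]
        refine Finset.sum_congr rfl fun z _ => ?_
        rw [Finset.sum_comm]

lemma expect_fun' (f : 𝒲 → 𝒜 → 𝒵 → ℳ → ℝ) :
    ∑ ω, P ω * f (W ω) (A ω) (Z ω) (M ω)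
      = ∑ w, ∑ a, ∑ z, ∑ m,
          pr P (fun ω => W ω = w ∧ A ω = a ∧ Z ω = z ∧ M ω = m) * f w a z m := by
  rw [sum_partition' W A Z M (fun ω => P ω * f (W ω) (A ω) (Z ω) (M ω))]
  refine Finset.sum_congr rfl fun w _ => Finset.sum_congr rfl fun a _ =>
    Finset.sum_congr rfl fun z _ => Finset.sum_congr rfl fun m _ => ?_
  unfold pr
  rw [Finset.sum_mul]
  refine Finset.sum_congr rfl fun ω _ => ?_
  by_cases h : W ω = w ∧ A ω = a ∧ Z ω = z ∧ M ω = m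
  · obtain ⟨h1, h2, h3, h4⟩ := h
    simp [h1, h2, h3, h4]
  · simp [h]

lemma sum_PY' (w : 𝒲) (a : 𝒜) (z : 𝒵) (m : ℳ)
    (h : 0 < pr P (fun ω => W ω = w ∧ A ω = a ∧ Z ω = z ∧ M ω = m)) :
    ∑ ω, (if W ω = w ∧ A ω = a ∧ Z ω = z ∧ M ω = m then P ω * Y ω else 0)
      = bb P W A Z M Y a z m w *
        pr P (fun ω => W ω = w ∧ A ω = a ∧ Z ω = z ∧ M ω = m) := by
  have he : pr P (fun ω => A ω = a ∧ Z ω = z ∧ M ω = m ∧ W ω = w)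
      = pr P (fun ω => W ω = w ∧ A ω = a ∧ Z ω = z ∧ M ω = m) :=
    pr_congr' P fun ω => by tauto
  unfold bb cex
  rw [he, div_mul_cancel₀ _ (ne_of_gt h)]
  refine Finset.sum_congr rfl fun ω _ => ?_
  by_cases h' : W ω = w ∧ A ω = a ∧ Z ω = z ∧ M ω = m
  · rw [if_pos h', if_pos (show A ω = a ∧ Z ω = z ∧ M ω = m ∧ W ω = w by tauto)]
  · rw [if_neg h', if_neg (show ¬(A ω = a ∧ Z ω = z ∧ M ω = m ∧ W ω = w) by tauto)]

lemma fiber_resid' (w : 𝒲) (a : 𝒜) (z : 𝒵) (m : ℳ) (K : ℝ)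
    (h : 0 < pr P (fun ω => W ω = w ∧ A ω = a ∧ Z ω = z ∧ M ω = m)) :
    ∑ ω, (if W ω = w ∧ A ω = a ∧ Z ω = z ∧ M ω = m then
      P ω * (K * (Y ω - bb P W A Z M Y a z m w)) else 0) = 0 := by
  have hb : ∀ ω, (if W ω = w ∧ A ω = a ∧ Z ω = z ∧ M ω = m then
        P ω * (K * (Y ω - bb P W A Z M Y a z m w)) else 0)
      = K * (if W ω = w ∧ A ω = a ∧ Z ω = z ∧ M ω = m then P ω * Y ω else 0)
        - (K * bb P W A Z M Y a z m w) *
          (if W ω = w ∧ A ω = a ∧ Z ω = z ∧ M ω = m then P ω else 0) := by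
    intro ω
    by_cases h' : W ω = w ∧ A ω = a ∧ Z ω = z ∧ M ω = m <;> simp [h'] <;> ring
  rw [Finset.sum_congr rfl fun ω _ => hb ω, Finset.sum_sub_distrib,
    ← Finset.mul_sum, ← Finset.mul_sum, sum_PY' P W A Z M Y w a z m h]
  have hN : (∑ ω, if W ω = w ∧ A ω = a ∧ Z ω = z ∧ M ω = m then P ω else 0)
      = pr P (fun ω => W ω = w ∧ A ω = a ∧ Z ω = z ∧ M ω = m) :=
    Finset.sum_congr rfl fun ω _ => by
      by_cases h' : W ω = w ∧ A ω = a ∧ Z ω = z ∧ M ω = m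
      · rw [if_pos h', if_pos h']
      · rw [if_neg h', if_neg h']
  rw [hN]; ring

lemma marg_m' (w : 𝒲) (a : 𝒜) (z : 𝒵) :
    ∑ m, pr P (fun ω => W ω = w ∧ A ω = a ∧ Z ω = z ∧ M ω = m)
      = pr P (fun ω => Z ω = z ∧ (A ω = a ∧ W ω = w)) := by
  rw [pr_fiber' P (fun ω => Z ω = z ∧ (A ω = a ∧ W ω = w)) M]
  exact Finset.sum_congr rfl fun m _ => pr_congr' P fun ω => by tauto

lemma marg_z' (w : 𝒲) (a : 𝒜) (m : ℳ) :
    ∑ z, pr P (fun ω => W ω = w ∧ A ω = a ∧ Z ω = z ∧ M ω = m)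
      = pr P (fun ω => M ω = m ∧ (A ω = a ∧ W ω = w)) := by
  rw [pr_fiber' P (fun ω => M ω = m ∧ (A ω = a ∧ W ω = w)) Z]
  exact Finset.sum_congr rfl fun z _ => pr_congr' P fun ω => by tauto

lemma marg_zm' (w : 𝒲) (a : 𝒜) :
    ∑ z, ∑ m, pr P (fun ω => W ω = w ∧ A ω = a ∧ Z ω = z ∧ M ω = m)
      = pr P (fun ω => A ω = a ∧ W ω = w) := by
  rw [pr_fiber' P (fun ω => A ω = a ∧ W ω = w) Z]
  refine Finset.sum_congr rfl fun z _ => ?_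
  rw [marg_m' P W A Z M w a z]
  exact (pr_congr' P fun ω => by tauto).symm

lemma marg_azm' (w : 𝒲) :
    ∑ a, ∑ z, ∑ m, pr P (fun ω => W ω = w ∧ A ω = a ∧ Z ω = z ∧ M ω = m)
      = pr P (fun ω => W ω = w) := by
  rw [pr_fiber' P (fun ω => W ω = w) A]
  refine Finset.sum_congr rfl fun a _ => ?_
  rw [marg_zm' P W A Z M w a]
  exact (pr_congr' P fun ω => by tauto).symm

lemma qq_mul' (w : 𝒲) (a : 𝒜) (z : 𝒵)
    (h : 0 < pr P (fun ω => A ω = a ∧ W ω = w)) :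
    qq P W A Z z a w * pr P (fun ω => A ω = a ∧ W ω = w)
      = pr P (fun ω => Z ω = z ∧ (A ω = a ∧ W ω = w)) := by
  unfold qq cpr
  rw [div_mul_cancel₀ _ (ne_of_gt h)]

lemma pM_mul' (w : 𝒲) (a : 𝒜) (m : ℳ)
    (h : 0 < pr P (fun ω => A ω = a ∧ W ω = w)) :
    pM P W A M m a w * pr P (fun ω => A ω = a ∧ W ω = w)
      = pr P (fun ω => M ω = m ∧ (A ω = a ∧ W ω = w)) := by
  unfold pM cpr
  rw [div_mul_cancel₀ _ (ne_of_gt h)]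

lemma qq_sum' (w : 𝒲) (a : 𝒜) (h : 0 < pr P (fun ω => A ω = a ∧ W ω = w)) :
    ∑ z, qq P W A Z z a w = 1 := by
  unfold qq cpr
  rw [← Finset.sum_div]
  rw [show ∑ z, pr P (fun ω => Z ω = z ∧ (A ω = a ∧ W ω = w))
      = pr P (fun ω => A ω = a ∧ W ω = w) from ?_, div_self (ne_of_gt h)]
  rw [pr_fiber' P (fun ω => A ω = a ∧ W ω = w) Z]
  exact Finset.sum_congr rfl fun z _ => pr_congr' P fun ω => by tauto

lemma pM_sum' (w : 𝒲) (a : 𝒜) (h : 0 < pr P (fun ω => A ω = a ∧ W ω = w)) :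
    ∑ m, pM P W A M m a w = 1 := by
  unfold pM cpr
  rw [← Finset.sum_div]
  rw [show ∑ m, pr P (fun ω => M ω = m ∧ (A ω = a ∧ W ω = w))
      = pr P (fun ω => A ω = a ∧ W ω = w) from ?_, div_self (ne_of_gt h)]
  rw [pr_fiber' P (fun ω => A ω = a ∧ W ω = w) M]
  exact Finset.sum_congr rfl fun m _ => pr_congr' P fun ω => by tauto

lemma inner_z' (w : 𝒲) (a : 𝒜) (K : ℝ) (U : 𝒵 → ℝ)
    (h : 0 < pr P (fun ω => A ω = a ∧ W ω = w)) :
    ∑ z, ∑ m, pr P (fun ω => W ω = w ∧ A ω = a ∧ Z ω = z ∧ M ω = m) *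
      (K * (U z - ∑ z', U z' * qq P W A Z z' a w)) = 0 := by
  have h1 : ∀ z : 𝒵, ∑ m, pr P (fun ω => W ω = w ∧ A ω = a ∧ Z ω = z ∧ M ω = m) *
        (K * (U z - ∑ z', U z' * qq P W A Z z' a w))
      = (qq P W A Z z a w * pr P (fun ω => A ω = a ∧ W ω = w)) *
        (K * (U z - ∑ z', U z' * qq P W A Z z' a w)) := fun z => by
    rw [← Finset.sum_mul, marg_m' P W A Z M w a z, ← qq_mul' P W A Z w a z h]
  rw [Finset.sum_congr rfl fun z _ => h1 z]
  have h2 : ∀ z : 𝒵, (qq P W A Z z a w * pr P (fun ω => A ω = a ∧ W ω = w)) *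
        (K * (U z - ∑ z', U z' * qq P W A Z z' a w))
      = (pr P (fun ω => A ω = a ∧ W ω = w) * K) * (U z * qq P W A Z z a w)
        - ((pr P (fun ω => A ω = a ∧ W ω = w) * K) *
            (∑ z', U z' * qq P W A Z z' a w)) * qq P W A Z z a w := fun z => by
    ring
  rw [Finset.sum_congr rfl fun z _ => h2 z, Finset.sum_sub_distrib,
    ← Finset.mul_sum, ← Finset.mul_sum, qq_sum' P W A Z w a h, mul_one, sub_self]

lemma inner_m' (w : 𝒲) (a : 𝒜) (K : ℝ) (B : ℳ → ℝ)
    (h : 0 < pr P (fun ω => A ω = a ∧ W ω = w)) :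
    ∑ z, ∑ m, pr P (fun ω => W ω = w ∧ A ω = a ∧ Z ω = z ∧ M ω = m) *
      (K * (B m - ∑ m', B m' * pM P W A M m' a w)) = 0 := by
  rw [Finset.sum_comm]
  have h1 : ∀ m : ℳ, ∑ z, pr P (fun ω => W ω = w ∧ A ω = a ∧ Z ω = z ∧ M ω = m) *
        (K * (B m - ∑ m', B m' * pM P W A M m' a w))
      = (pM P W A M m a w * pr P (fun ω => A ω = a ∧ W ω = w)) *
        (K * (B m - ∑ m', B m' * pM P W A M m' a w)) := fun m => by
    rw [← Finset.sum_mul, marg_z' P W A Z M w a m, ← pM_mul' P W A M w a m h]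
  rw [Finset.sum_congr rfl fun m _ => h1 m]
  have h2 : ∀ m : ℳ, (pM P W A M m a w * pr P (fun ω => A ω = a ∧ W ω = w)) *
        (K * (B m - ∑ m', B m' * pM P W A M m' a w))
      = (pr P (fun ω => A ω = a ∧ W ω = w) * K) * (B m * pM P W A M m a w)
        - ((pr P (fun ω => A ω = a ∧ W ω = w) * K) *
            (∑ m', B m' * pM P W A M m' a w)) * pM P W A M m a w := fun m => by
    ring
  rw [Finset.sum_congr rfl fun m _ => h2 m, Finset.sum_sub_distrib,
    ← Finset.mul_sum, ← Finset.mul_sum, pM_sum' P W A M w a h, mul_one, sub_self]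

end AuxLemmas

/-- Multiple robustness (case `b`, `q` correct): with `b₁ = b`,
`q₁ = q`, `u₁` and `v₁` recomputed accordingly, and `g₁, h₁, r₁` arbitrary strictly
positive conditional pmfs, `E[D_{η₁}(O)] = θ`. -/
theorem multiple_robustness_bq (hP : ∀ ω, 0 ≤ P ω) (hsum : ∑ ω, P ω = 1)
    (hpos : ∀ w a z m,
      0 < pr P (fun ω => W ω = w ∧ A ω = a ∧ Z ω = z ∧ M ω = m))
    (g₁ : 𝒜 → 𝒲 → ℝ) (h₁ : 𝒜 → ℳ → 𝒲 → ℝ) (r₁ : 𝒵 → 𝒜 → ℳ → 𝒲 → ℝ)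
    (hg₁ : ∀ a w, 0 < g₁ a w) (hg₁sum : ∀ w, ∑ a, g₁ a w = 1)
    (hh₁ : ∀ a m w, 0 < h₁ a m w) (hh₁sum : ∀ m w, ∑ a, h₁ a m w = 1)
    (hr₁ : ∀ z a m w, 0 < r₁ z a m w) (hr₁sum : ∀ a m w, ∑ z, r₁ z a m w = 1)
    (a' astar : 𝒜) :
    ∑ ω, P ω * DOne P W A Z M Y g₁ h₁ r₁ a' astar ω =
      θparam P W A Z M Y a' astar := by
  classical
  have hΩ : Nonempty Ω := by
    by_contra h
    rw [not_nonempty_iff] at h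
    rw [Finset.univ_eq_empty, Finset.sum_empty] at hsum
    exact one_ne_zero hsum.symm
  obtain ⟨ω₀⟩ := hΩ
  have hAW : ∀ a w, 0 < pr P (fun ω => A ω = a ∧ W ω = w) := fun a w =>
    lt_of_lt_of_le (hpos w a (Z ω₀) (M ω₀))
      (pr_mono' P hP fun ω hh => ⟨hh.2.1, hh.1⟩)
  have hsplit : ∑ ω, P ω * DOne P W A Z M Y g₁ h₁ r₁ a' astar ω
      = (∑ ω, P ω * ((if A ω = a' then (1:ℝ) else 0) / g₁ a' (W ω) *
          cOne P W A Z g₁ h₁ r₁ astar a' (Z ω) (M ω) (W ω) *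
          (Y ω - bb P W A Z M Y a' (Z ω) (M ω) (W ω))))
        + (∑ ω, P ω * ((if A ω = a' then (1:ℝ) else 0) / g₁ a' (W ω) *
            (uu P W A Z M Y astar (Z ω) a' (W ω) -
              ∑ z, uu P W A Z M Y astar z a' (W ω) * qq P W A Z z a' (W ω))))
        + (∑ ω, P ω * ((if A ω = astar then (1:ℝ) else 0) / g₁ astar (W ω) *
            ((∑ z, bb P W A Z M Y a' z (M ω) (W ω) * qq P W A Z z a' (W ω)) -
              vv P W A Z M Y a' astar (W ω))))
        + (∑ ω, P ω * vv P W A Z M Y a' astar (W ω)) := by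
    rw [← Finset.sum_add_distrib, ← Finset.sum_add_distrib, ← Finset.sum_add_distrib]
    refine Finset.sum_congr rfl fun ω _ => ?_
    unfold DOne
    ring
  rw [hsplit]
  have hE1 : (∑ ω, P ω * ((if A ω = a' then (1:ℝ) else 0) / g₁ a' (W ω) *
      cOne P W A Z g₁ h₁ r₁ astar a' (Z ω) (M ω) (W ω) *
      (Y ω - bb P W A Z M Y a' (Z ω) (M ω) (W ω)))) = 0 := by
    rw [sum_partition' W A Z M (fun ω => P ω *
      ((if A ω = a' then (1:ℝ) else 0) / g₁ a' (W ω) *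
        cOne P W A Z g₁ h₁ r₁ astar a' (Z ω) (M ω) (W ω) *
        (Y ω - bb P W A Z M Y a' (Z ω) (M ω) (W ω))))]
    refine Finset.sum_eq_zero fun w _ => Finset.sum_eq_zero fun a _ =>
      Finset.sum_eq_zero fun z _ => Finset.sum_eq_zero fun m _ => ?_
    beta_reduce
    have hrw : ∀ ω : Ω, (if W ω = w ∧ A ω = a ∧ Z ω = z ∧ M ω = m then
        P ω * ((if A ω = a' then (1:ℝ) else 0) / g₁ a' (W ω) *
          cOne P W A Z g₁ h₁ r₁ astar a' (Z ω) (M ω) (W ω) *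
          (Y ω - bb P W A Z M Y a' (Z ω) (M ω) (W ω))) else 0)
      = (if W ω = w ∧ A ω = a ∧ Z ω = z ∧ M ω = m then
          P ω * (((if a = a' then (1:ℝ) else 0) / g₁ a' w *
            cOne P W A Z g₁ h₁ r₁ astar a' z m w) *
            (Y ω - bb P W A Z M Y a' z m w)) else 0) := by
      intro ω
      by_cases h' : W ω = w ∧ A ω = a ∧ Z ω = z ∧ M ω = m
      · obtain ⟨h1, h2, h3, h4⟩ := h'
        subst h1; subst h2; subst h3; subst h4
        rfl
      · rw [if_neg h', if_neg h']
    rw [Finset.sum_congr rfl fun ω _ => hrw ω]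
    by_cases hne : a = a'
    · rw [hne]
      exact fiber_resid' P W A Z M Y w a' z m _ (hpos w a' z m)
    · refine Finset.sum_eq_zero fun ω _ => ?_
      by_cases h' : W ω = w ∧ A ω = a ∧ Z ω = z ∧ M ω = m
      · rw [if_pos h', if_neg hne]
        simp
      · rw [if_neg h']
  have hE2 : (∑ ω, P ω * ((if A ω = a' then (1:ℝ) else 0) / g₁ a' (W ω) *
      (uu P W A Z M Y astar (Z ω) a' (W ω) -
        ∑ z, uu P W A Z M Y astar z a' (W ω) * qq P W A Z z a' (W ω)))) = 0 := by
    rw [expect_fun' P W A Z M (fun w a z _ => (if a = a' then (1:ℝ) else 0) / g₁ a' w *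
      (uu P W A Z M Y astar z a' w -
        ∑ z', uu P W A Z M Y astar z' a' w * qq P W A Z z' a' w))]
    refine Finset.sum_eq_zero fun w _ => Finset.sum_eq_zero fun a _ => ?_
    beta_reduce
    by_cases hne : a = a'
    · rw [hne]
      exact inner_z' P W A Z M w a' _ _ (hAW a' w)
    · refine Finset.sum_eq_zero fun z _ => Finset.sum_eq_zero fun m _ => ?_
      simp [hne]
  have hE3 : (∑ ω, P ω * ((if A ω = astar then (1:ℝ) else 0) / g₁ astar (W ω) *
      ((∑ z, bb P W A Z M Y a' z (M ω) (W ω) * qq P W A Z z a' (W ω)) -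
        vv P W A Z M Y a' astar (W ω)))) = 0 := by
    have hv : ∀ w, vv P W A Z M Y a' astar w
        = ∑ m, (∑ z, bb P W A Z M Y a' z m w * qq P W A Z z a' w) *
            pM P W A M m astar w :=
      fun w => Finset.sum_congr rfl fun m _ => (Finset.sum_mul _ _ _).symm
    simp only [hv]
    rw [expect_fun' P W A Z M (fun w a _ m => (if a = astar then (1:ℝ) else 0) / g₁ astar w *
      ((∑ z', bb P W A Z M Y a' z' m w * qq P W A Z z' a' w) -
        ∑ m', (∑ z', bb P W A Z M Y a' z' m' w * qq P W A Z z' a' w) *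
          pM P W A M m' astar w))]
    refine Finset.sum_eq_zero fun w _ => Finset.sum_eq_zero fun a _ => ?_
    beta_reduce
    by_cases hne : a = astar
    · rw [hne]
      exact inner_m' P W A Z M w astar _ _ (hAW astar w)
    · refine Finset.sum_eq_zero fun z _ => Finset.sum_eq_zero fun m _ => ?_
      simp [hne]
  have hE4 : (∑ ω, P ω * vv P W A Z M Y a' astar (W ω))
      = θparam P W A Z M Y a' astar := by
    rw [expect_fun' P W A Z M (fun w _ _ _ => vv P W A Z M Y a' astar w)]
    have h1 : ∀ w : 𝒲, ∑ a, ∑ z, ∑ m,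
        pr P (fun ω => W ω = w ∧ A ω = a ∧ Z ω = z ∧ M ω = m) *
          vv P W A Z M Y a' astar w
        = pr P (fun ω => W ω = w) * vv P W A Z M Y a' astar w := fun w => by
      simp only [← Finset.sum_mul]
      rw [marg_azm' P W A Z M w]
    rw [Finset.sum_congr rfl fun w _ => h1 w]
    unfold θparam vv
    refine Finset.sum_congr rfl fun w _ => ?_
    simp only [Finset.mul_sum]
    rw [Finset.sum_comm]
    exact Finset.sum_congr rfl fun z _ => Finset.sum_congr rfl fun m _ => by ring
  rw [hE1, hE2, hE3, hE4]
  ring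


end EIF
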